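/- Let m > 0. The function q ↦ δE(q) is continuous on [0,∞). -/
import Mathlib


open MeasureTheory

/-- The one-particle energy `ω(p) = √(p² + m²)`. -/
noncomputable def ω (m p : ℝ) : ℝ := Real.sqrt (p ^ 2 + m ^ 2)

/-- `Ω(p,q,θ) = √(p² + q² + 2pq cos θ + m²)` in spherical coordinates. -/
noncomputable def Ω (m p q c : ℝ) : ℝ := Real.sqrt (p ^ 2 + q ^ 2 + 2 * p * q * c + m ^ 2)

/-- Integrand of the noncommutative second-order energy correction in spherical
coordinates (`c = cos θ`). -/
noncomputable def F (m q p c : ℝ) : ℝ :=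
  p ^ 2 * Real.exp (-(10 / 3) * p ^ 2) * Real.exp (-(8 / 3) * q * p * c) *
    Real.exp (-(ω m p) * Ω m p q c + ω m p * ω m q) / (ω m p * Ω m p q c) *
    (Real.exp (Ω m p q c * ω m q) / (ω m p + Ω m p q c - ω m q) +
      Real.exp (-(Ω m p q c) * ω m q) / (ω m p + Ω m p q c + ω m q))

/-- The noncommutative second-order energy correction `δE(q)`. -/
noncomputable def δE (m q : ℝ) : ℝ :=
  Real.exp (-(10 / 3) * q ^ 2 - 2 * m) / (16 * (2 * Real.pi) ^ 5 * ω m q) *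
    ∫ p in Set.Ioi (0 : ℝ), ∫ c in (-1 : ℝ)..1, F m q p c

set_option linter.unusedVariables false

variable {m p q c : ℝ}


lemma S_nonneg (hc : |c| ≤ 1) : 0 ≤ p ^ 2 + q ^ 2 + 2 * p * q * c + m ^ 2 := by
  obtain ⟨h1, h2⟩ := abs_le.mp hc
  nlinarith [mul_nonneg (by linarith : (0:ℝ) ≤ 1 + c) (sq_nonneg (p + q)),
    mul_nonneg (by linarith : (0:ℝ) ≤ 1 - c) (sq_nonneg (p - q)), sq_nonneg m]

lemma omega_sq (hm : 0 < m) : (ω m p) ^ 2 = p ^ 2 + m ^ 2 := by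
  rw [ω, Real.sq_sqrt]; positivity

lemma omega_pos (hm : 0 < m) : 0 < ω m p := by
  rw [ω]; positivity

lemma le_omega (hm : 0 < m) : m ≤ ω m p :=
  Real.le_sqrt_of_sq_le (by nlinarith [sq_nonneg p])

lemma abs_lt_omega (hm : 0 < m) : |p| < ω m p := by
  rw [ω, Real.lt_sqrt (abs_nonneg p), sq_abs]; nlinarith

lemma omega_le (hm : 0 < m) : ω m p ≤ |p| + m :=
  calc ω m p ≤ Real.sqrt ((|p| + m)^2) := by
        apply Real.sqrt_le_sqrt; nlinarith [abs_nonneg p, sq_abs p]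
  _ = |p| + m := Real.sqrt_sq (by positivity)

lemma Omega_sq (hm : 0 < m) (hc : |c| ≤ 1) :
    (Ω m p q c) ^ 2 = p ^ 2 + q ^ 2 + 2 * p * q * c + m ^ 2 := by
  rw [Ω, Real.sq_sqrt (S_nonneg hc)]

lemma le_Omega (hm : 0 < m) (hc : |c| ≤ 1) : m ≤ Ω m p q c := by
  obtain ⟨h1, h2⟩ := abs_le.mp hc
  exact Real.le_sqrt_of_sq_le (by
    nlinarith [mul_nonneg (by linarith : (0:ℝ) ≤ 1 + c) (sq_nonneg (p + q)),
      mul_nonneg (by linarith : (0:ℝ) ≤ 1 - c) (sq_nonneg (p - q))])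

lemma Omega_pos (hm : 0 < m) (hc : |c| ≤ 1) : 0 < Ω m p q c :=
  lt_of_lt_of_le hm (le_Omega hm hc)

lemma pqc_le : |c| ≤ 1 → p * q * c ≤ |p| * |q| := fun hc =>
  calc p * q * c ≤ |p * q * c| := le_abs_self _
  _ = |p| * |q| * |c| := by rw [abs_mul, abs_mul]
  _ ≤ |p| * |q| * 1 := mul_le_mul_of_nonneg_left hc (by positivity)
  _ = |p| * |q| := mul_one _

lemma Omega_le (hm : 0 < m) (hc : |c| ≤ 1) : Ω m p q c ≤ |p| + |q| + m :=
  calc Ω m p q c ≤ Real.sqrt ((|p| + |q| + m)^2) := by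
        apply Real.sqrt_le_sqrt
        nlinarith [abs_nonneg p, abs_nonneg q, sq_abs p, sq_abs q, pqc_le (p := p) (q := q) hc]
  _ = _ := Real.sqrt_sq (by positivity)

lemma abs_le_Omega (hm : 0 < m) (hc : |c| ≤ 1) : |p + q * c| ≤ Ω m p q c := by
  obtain ⟨h1, h2⟩ := abs_le.mp hc
  rw [show |p + q * c| = Real.sqrt ((p + q*c)^2) from (Real.sqrt_sq_eq_abs _).symm]
  apply Real.sqrt_le_sqrt
  nlinarith [mul_nonneg (mul_nonneg (sq_nonneg q) (by linarith : (0:ℝ) ≤ 1-c))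
    (by linarith : (0:ℝ) ≤ 1+c)]

lemma omega_le_Omega_add (hm : 0 < m) (hc : |c| ≤ 1) : ω m q ≤ Ω m p q c + |p| := by
  have h1 := abs_le_Omega (p := p) (q := q) hm hc
  have h2 : |p + q*c| * |p| = |(p + q*c) * p| := (abs_mul _ _).symm
  have h3 : -((p + q*c) * p) ≤ |(p + q*c) * p| := neg_le_abs _
  have h4 : 0 ≤ Ω m p q c + |p| := add_nonneg (Omega_pos (p := p) (q := q) hm hc).le (abs_nonneg p)
  have h5 : (ω m q)^2 ≤ (Ω m p q c + |p|)^2 := by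
    rw [omega_sq hm]
    have := Omega_sq (p := p) (q := q) hm hc
    have hO := Omega_pos (p := p) (q := q) hm hc
    have h6 : |p + q*c| * |p| ≤ Ω m p q c * |p| :=
      mul_le_mul_of_nonneg_right h1 (abs_nonneg p)
    nlinarith [sq_abs p]
  nlinarith [Real.sqrt_nonneg (q^2 + m^2), omega_sq (m := m) (p := q) hm]

lemma den2_pos (hm : 0 < m) (hc : |c| ≤ 1) : 0 < ω m p + Ω m p q c - ω m q := by
  have h1 := omega_le_Omega_add (p := p) (q := q) hm hc
  have h2 := abs_lt_omega (p := p) (m := m) hm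
  linarith

lemma den2_lb (hm : 0 < m) (hc : |c| ≤ 1) :
    m^2 / (2 * (|p| + m)) ≤ ω m p + Ω m p q c - ω m q := by
  have h1 := omega_le_Omega_add (p := p) (q := q) hm hc
  have h2 := abs_lt_omega (p := p) (m := m) hm
  have h3 := omega_sq (p := p) hm
  have h4 := omega_le (p := p) hm
  have h5 : 0 < 2 * (|p| + m) := by positivity
  rw [div_le_iff₀ h5]
  have h6 : ω m p + |p| ≤ 2 * (|p| + m) := by linarith [abs_nonneg p]
  have h7 : 0 ≤ ω m p - |p| := by linarith
  have h8 : (ω m p - |p|) * (ω m p + |p|) ≤ (ω m p - |p|) * (2 * (|p| + m)) :=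
    mul_le_mul_of_nonneg_left h6 h7
  have h9 : (ω m p - |p|) * (ω m p + |p|) = m ^ 2 := by
    have := sq_abs p; nlinarith
  nlinarith [mul_le_mul_of_nonneg_right
    (show ω m p - ω m q + Ω m p q c ≥ ω m p - |p| by linarith) h5.le]


lemma cube_le (p : ℝ) : p^3 + p^2 ≤ 6 * Real.exp (p^2) := by
  have h1 : 1 + p^2 ≤ Real.exp (p^2) := by linarith [Real.add_one_le_exp (p^2)]
  have h2 : 1 + p^2/2 ≤ Real.exp (p^2/2) := by linarith [Real.add_one_le_exp (p^2/2)]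
  have h3 : Real.exp (p^2) = Real.exp (p^2/2) * Real.exp (p^2/2) := by
    rw [← Real.exp_add]; ring_nf
  have h4 : (1 + p^2/2) * (1 + p^2/2) ≤ Real.exp (p^2) := by
    rw [h3]
    exact mul_le_mul h2 h2 (by positivity) (Real.exp_pos _).le
  nlinarith [sq_nonneg (p^2 - p), sq_nonneg p, Real.exp_pos (p^2)]

lemma sq_le_exp (p : ℝ) : p^2 ≤ Real.exp (p^2) := by
  linarith [Real.add_one_le_exp (p^2), sq_nonneg p]

noncomputable def Kc (m Q : ℝ) : ℝ :=
  (12 * (1 + m) / m ^ 4 + 1 / m ^ 3) *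
    Real.exp (3 * (8/3 * Q + 2 * (Q + m)) ^ 2 / 4 + 2 * (Q + m) ^ 2)

lemma F_nonneg (hm : 0 < m) (hc : |c| ≤ 1) : 0 ≤ F m q p c := by
  have h1 := omega_pos (p := p) hm
  have h2 := Omega_pos (p := p) (q := q) hm hc
  have h3 := den2_pos (p := p) (q := q) hm hc
  have h4 : 0 < ω m p + Ω m p q c + ω m q := by
    have := omega_pos (p := q) hm; linarith
  apply mul_nonneg
  · apply div_nonneg (by positivity) (by positivity)
  · exact add_nonneg (div_nonneg (Real.exp_pos _).le h3.le)
      (div_nonneg (Real.exp_pos _).le h4.le)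

set_option maxHeartbeats 1000000 in
lemma F_le {Q : ℝ} (hm : 0 < m) (hQ : 0 ≤ Q) (hq0 : 0 ≤ q) (hqQ : q ≤ Q)
    (hp : 0 ≤ p) (hc : |c| ≤ 1) : F m q p c ≤ Kc m Q * Real.exp (-2 * p ^ 2) := by
  have hp' : |p| = p := abs_of_nonneg hp
  have hq' : |q| = q := abs_of_nonneg hq0
  set w := ω m p with hw
  set v := ω m q with hv
  set W := Ω m p q c with hW
  have hw1 : m ≤ w := le_omega hm
  have hw2 : w ≤ p + m := by have := omega_le (p := p) hm; rwa [hp'] at this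
  have hv1 : m ≤ v := le_omega hm
  have hv2 : v ≤ Q + m := by
    have := omega_le (p := q) hm; rw [hq'] at this; linarith
  have hW1 : m ≤ W := le_Omega hm hc
  have hW2 : W ≤ p + (Q + m) := by
    have := Omega_le (p := p) (q := q) hm hc; rw [hp', hq'] at this; linarith
  have hd2 : m ^ 2 / (2 * (p + m)) ≤ w + W - v := by
    have := den2_lb (p := p) (q := q) hm hc; rwa [hp'] at this
  have hd2' : 0 < w + W - v := den2_pos hm hc
  have hd3 : m ≤ w + W + v := by linarith
  have hw0 : 0 < w := omega_pos hm
  have hv0 : 0 < v := omega_pos hm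
  have hW0 : 0 < W := Omega_pos hm hc
  calc F m q p c
      ≤ p ^ 2 * Real.exp (-(10 / 3) * p ^ 2) * Real.exp (8/3 * Q * p) *
          Real.exp ((p + m) * (Q + m)) / (m * m) *
          (Real.exp ((p + (Q + m)) * (Q + m)) * (2 * (p + m) / m ^ 2) + 1 / m) := by
        apply mul_le_mul
        · apply div_le_div₀ (by positivity)
          · apply mul_le_mul
            · apply mul_le_mul_of_nonneg_left _ (by positivity)
              apply Real.exp_le_exp.mpr
              obtain ⟨hc1, hc2⟩ := abs_le.mp hc
              nlinarith [mul_nonneg hq0 hp, mul_le_mul_of_nonneg_right hqQ hp,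
                mul_nonneg (mul_nonneg hq0 hp) (by linarith : (0:ℝ) ≤ 1 + c)]
            · apply Real.exp_le_exp.mpr
              have hwv : w * v ≤ (p + m) * (Q + m) :=
                mul_le_mul hw2 hv2 hv0.le (by linarith)
              nlinarith [mul_pos hw0 hW0]
            · positivity
            · positivity
          · positivity
          · exact mul_le_mul hw1 hW1 hm.le (by linarith)
        · apply add_le_add
          · rw [div_le_iff₀ hd2']
            have e4le : Real.exp (W * v) ≤ Real.exp ((p + (Q + m)) * (Q + m)) :=
              Real.exp_le_exp.mpr (mul_le_mul hW2 hv2 hv0.le (by linarith))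
            have h1 : 1 ≤ 2 * (p + m) / m ^ 2 * (w + W - v) := by
              have heq : (1:ℝ) = 2 * (p + m) / m ^ 2 * (m ^ 2 / (2 * (p + m))) := by
                field_simp
              rw [heq]
              exact mul_le_mul_of_nonneg_left hd2 (by positivity)
            calc Real.exp (W * v) = Real.exp (W * v) * 1 := (mul_one _).symm
              _ ≤ Real.exp ((p + (Q + m)) * (Q + m)) * (2 * (p + m) / m ^ 2 * (w + W - v)) :=
                  mul_le_mul e4le h1 zero_le_one (Real.exp_pos _).le
              _ = Real.exp ((p + (Q + m)) * (Q + m)) * (2 * (p + m) / m ^ 2) * (w + W - v) := by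
                  ring
          · exact div_le_div₀ zero_le_one
              (Real.exp_le_one_iff.mpr (by nlinarith [mul_nonneg hW0.le hv0.le])) hm hd3
        · exact add_nonneg (div_nonneg (Real.exp_pos _).le hd2'.le)
            (div_nonneg (Real.exp_pos _).le (by linarith))
        · positivity
    _ = 2 * p ^ 2 * (p + m) *
          (Real.exp (-(10 / 3) * p ^ 2) * Real.exp (8/3 * Q * p) * Real.exp ((p + m) * (Q + m)) *
            Real.exp ((p + (Q + m)) * (Q + m))) / m ^ 4 +
          p ^ 2 * (Real.exp (-(10 / 3) * p ^ 2) * Real.exp (8/3 * Q * p) *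
            Real.exp ((p + m) * (Q + m))) / m ^ 3 := by
        field_simp
    _ ≤ 12 * (1 + m) * Real.exp (p ^ 2) *
          (Real.exp (-(10 / 3) * p ^ 2) * Real.exp (8/3 * Q * p) * Real.exp ((p + m) * (Q + m)) *
            Real.exp ((p + (Q + m)) * (Q + m))) / m ^ 4 +
          Real.exp (p ^ 2) * (Real.exp (-(10 / 3) * p ^ 2) * Real.exp (8/3 * Q * p) *
            Real.exp ((p + m) * (Q + m))) / m ^ 3 := by
        gcongr ?x * _ / _ + ?y * _ / _
        · nlinarith [cube_le p, Real.exp_pos (p^2), mul_nonneg (mul_nonneg hp hp) hp,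
            mul_nonneg hp hp]
        · exact sq_le_exp p
    _ ≤ 12 * (1 + m) *
          Real.exp (-2 * p ^ 2 + (3 * (8/3 * Q + 2 * (Q + m)) ^ 2 / 4 + 2 * (Q + m) ^ 2)) / m ^ 4 +
          Real.exp (-2 * p ^ 2 + (3 * (8/3 * Q + 2 * (Q + m)) ^ 2 / 4 + 2 * (Q + m) ^ 2)) / m ^ 3 := by
        have key1 : Real.exp (p ^ 2) *
            (Real.exp (-(10 / 3) * p ^ 2) * Real.exp (8/3 * Q * p) * Real.exp ((p + m) * (Q + m)) *
              Real.exp ((p + (Q + m)) * (Q + m))) ≤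
            Real.exp (-2 * p ^ 2 + (3 * (8/3 * Q + 2 * (Q + m)) ^ 2 / 4 + 2 * (Q + m) ^ 2)) := by
          rw [← Real.exp_add, ← Real.exp_add, ← Real.exp_add, ← Real.exp_add]
          apply Real.exp_le_exp.mpr
          nlinarith [sq_nonneg (2 * p - 3 * (8/3 * Q + 2 * (Q + m))),
            mul_nonneg hQ (by linarith : (0:ℝ) ≤ Q + m)]
        have key2 : Real.exp (p ^ 2) *
            (Real.exp (-(10 / 3) * p ^ 2) * Real.exp (8/3 * Q * p) *
              Real.exp ((p + m) * (Q + m))) ≤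
            Real.exp (-2 * p ^ 2 + (3 * (8/3 * Q + 2 * (Q + m)) ^ 2 / 4 + 2 * (Q + m) ^ 2)) := by
          rw [← Real.exp_add, ← Real.exp_add, ← Real.exp_add]
          apply Real.exp_le_exp.mpr
          nlinarith [sq_nonneg (2 * p - 3 * (8/3 * Q + 2 * (Q + m))),
            mul_nonneg hQ (by linarith : (0:ℝ) ≤ Q + m), mul_nonneg hp hQ,
            mul_nonneg hp hm.le, sq_nonneg p]
        apply add_le_add
        · rw [mul_assoc (12 * (1 + m))]
          exact div_le_div₀ (by positivity)
            (mul_le_mul_of_nonneg_left key1 (by positivity)) (by positivity) le_rfl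
        · exact div_le_div₀ (Real.exp_pos _).le key2 (by positivity) le_rfl
    _ = Kc m Q * Real.exp (-2 * p ^ 2) := by
        rw [Kc, Real.exp_add]; ring

noncomputable def clampc (c : ℝ) : ℝ := max (-1) (min 1 c)

lemma clampc_abs_le (c : ℝ) : |clampc c| ≤ 1 :=
  abs_le.mpr ⟨le_max_left _ _, max_le (by norm_num) (min_le_left _ _)⟩

lemma clampc_continuous : Continuous clampc :=
  continuous_const.max (continuous_const.min continuous_id)

lemma clampc_eq_of_mem {c : ℝ} (h : c ∈ Set.Icc (-1:ℝ) 1) : clampc c = c := by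
  unfold clampc
  rw [min_eq_right h.2, max_eq_right h.1]

lemma contF (hm : 0 < m) :
    Continuous fun y : (ℝ × ℝ) × ℝ => F m y.1.1 y.1.2 (clampc y.2) := by
  have hω' : Continuous fun x : ℝ => ω m x := by
    unfold ω; exact Real.continuous_sqrt.comp (by continuity)
  have hcq : Continuous fun y : (ℝ × ℝ) × ℝ => y.1.1 := continuous_fst.fst
  have hcp : Continuous fun y : (ℝ × ℝ) × ℝ => y.1.2 := continuous_fst.snd
  have hcc : Continuous fun y : (ℝ × ℝ) × ℝ => clampc y.2 := clampc_continuous.comp continuous_snd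
  have hωp : Continuous fun y : (ℝ × ℝ) × ℝ => ω m y.1.2 := hω'.comp hcp
  have hωq : Continuous fun y : (ℝ × ℝ) × ℝ => ω m y.1.1 := hω'.comp hcq
  have hΩ' : Continuous fun y : (ℝ × ℝ) × ℝ => Ω m y.1.2 y.1.1 (clampc y.2) := by
    unfold Ω
    apply Real.continuous_sqrt.comp
    exact (((hcp.pow 2).add (hcq.pow 2)).add
      (((continuous_const.mul hcp).mul hcq).mul hcc)).add continuous_const
  unfold F
  apply Continuous.mul
  · apply Continuous.div
    · exact (((hcp.pow 2).mul
        (Real.continuous_exp.comp ((continuous_const.mul (hcp.pow 2))))).mul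
        (Real.continuous_exp.comp ((((continuous_const.mul hcq).mul hcp).mul hcc)))).mul
        (Real.continuous_exp.comp (((hωp.neg.mul hΩ')).add (hωp.mul hωq)))
    · exact hωp.mul hΩ'
    · intro y
      exact (mul_pos (omega_pos hm) (Omega_pos hm (clampc_abs_le _))).ne'
  · apply Continuous.add
    · apply Continuous.div
      · exact Real.continuous_exp.comp (hΩ'.mul hωq)
      · exact (hωp.add hΩ').sub hωq
      · intro y; exact (den2_pos hm (clampc_abs_le _)).ne'
    · apply Continuous.div
      · exact Real.continuous_exp.comp (hΩ'.neg.mul hωq)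
      · exact (hωp.add hΩ').add hωq
      · intro y
        have h1 := omega_pos (m := m) (p := y.1.2) hm
        have h2 := omega_pos (m := m) (p := y.1.1) hm
        have h3 := Omega_pos (m := m) (p := y.1.2) (q := y.1.1) (c := clampc y.2) hm
          (clampc_abs_le _)
        positivity
  
lemma contG (hm : 0 < m) :
    Continuous fun x : ℝ × ℝ => ∫ c in (-1:ℝ)..1, F m x.1 x.2 c := by
  have h1 : Continuous fun x : ℝ × ℝ => ∫ c in (-1:ℝ)..1, F m x.1 x.2 (clampc c) :=
    intervalIntegral.continuous_parametric_intervalIntegral_of_continuous'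
      (μ := volume) (f := fun (x : ℝ × ℝ) (c : ℝ) => F m x.1 x.2 (clampc c)) (contF hm) (-1) 1
  apply h1.congr
  intro x
  apply intervalIntegral.integral_congr
  intro c hc
  rw [Set.uIcc_of_le (by norm_num : (-1:ℝ) ≤ 1)] at hc
  simp only [clampc_eq_of_mem hc]

theorem stmt6 (m : ℝ) (hm : 0 < m) : ContinuousOn (δE m) (Set.Ici (0 : ℝ)) := by
  have hω' : Continuous fun x : ℝ => ω m x := by
    unfold ω; exact Real.continuous_sqrt.comp (by continuity)
  have hpre : Continuous fun q : ℝ =>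
      Real.exp (-(10 / 3) * q ^ 2 - 2 * m) / (16 * (2 * Real.pi) ^ 5 * ω m q) := by
    apply Continuous.div
    · exact Real.continuous_exp.comp (by continuity)
    · exact continuous_const.mul hω'
    · intro q
      have h1 := omega_pos (m := m) (p := q) hm
      have h2 := Real.pi_pos
      positivity
  have hI : ContinuousOn (fun q : ℝ => ∫ p in Set.Ioi (0:ℝ), ∫ c in (-1:ℝ)..1, F m q p c)
      (Set.Ici (0:ℝ)) := by
    intro q0 hq0
    have hq00 : (0:ℝ) ≤ q0 := hq0
    apply MeasureTheory.continuousWithinAt_of_dominated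
      (bound := fun p => 2 * (Kc m (q0 + 1) * Real.exp (-2 * p ^ 2)))
    · apply Filter.Eventually.of_forall
      intro q
      exact ((contG hm).comp (continuous_const.prodMk continuous_id)).aestronglyMeasurable
    · have h1 : ∀ᶠ q' in nhdsWithin q0 (Set.Ici 0), q' ∈ Set.Ici (0:ℝ) :=
        self_mem_nhdsWithin
      have h2 : ∀ᶠ q' in nhdsWithin q0 (Set.Ici 0), q' ≤ q0 + 1 :=
        Filter.Eventually.filter_mono nhdsWithin_le_nhds
          (Filter.Eventually.mono (eventually_lt_nhds (by linarith : q0 < q0 + 1)) fun _ h => h.le)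
      filter_upwards [h1, h2] with q' hq' hq1'
      filter_upwards [ae_restrict_mem measurableSet_Ioi] with p hp
      rw [show (2:ℝ) * (Kc m (q0 + 1) * Real.exp (-2 * p ^ 2)) =
        Kc m (q0 + 1) * Real.exp (-2 * p ^ 2) * |(1:ℝ) - (-1)| by rw [show |(1:ℝ) - (-1)| = 2 by norm_num]; ring]
      apply intervalIntegral.norm_integral_le_of_norm_le_const
      intro c hc
      rw [Set.uIoc_of_le (by norm_num : (-1:ℝ) ≤ 1)] at hc
      have hcabs : |c| ≤ 1 := abs_le.mpr ⟨hc.1.le, hc.2⟩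
      rw [Real.norm_eq_abs, abs_of_nonneg (F_nonneg hm hcabs)]
      exact F_le hm (by linarith) hq' hq1' (le_of_lt hp) hcabs
    · apply Integrable.restrict
      exact ((integrable_exp_neg_mul_sq (by norm_num : (0:ℝ) < 2)).const_mul
        (Kc m (q0 + 1))).const_mul 2
    · apply Filter.Eventually.of_forall
      intro p
      exact (((contG hm).comp (continuous_id.prodMk continuous_const)).continuousAt).continuousWithinAt
  exact hpre.continuousOn.mul hI
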